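/- For any decision rule system S: (a) h_EAR(S) ≥ h_AR(S) ≥ d(S); (b) if S is SR-reduced, then h_ESR(S) ≥ d(S); (c) if S is AD-reduced, then h_EAD(S) ≥ d(S). -/

import Mathlib

open scoped Classical
noncomputable section

/-- Attributes are natural numbers. -/
abbrev Attr := ℕ
/-- A value in an equation system: `some δ` is a number, `none` is the special symbol `*`. -/
abbrev Val := Option ℕ
/-- A decision rule: left-hand side (set of equations attribute = numeric value) and
right-hand side (decision). -/
abbrev Rule := Finset (Attr × ℕ) × ℕ
/-- An equation system over attributes with possibly `*` values. -/
abbrev EqSys := Finset (Attr × Val)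
/-- A decision rule system. -/
abbrev DRS := Finset Rule

/-- The equation system `K(r)` of a rule. -/
def Kr (r : Rule) : EqSys := r.1.image fun p => (p.1, some p.2)
/-- The set `A(r)` of attributes of a rule. -/
def Ar (r : Rule) : Finset Attr := r.1.image Prod.fst
/-- The length of a rule. -/
def ruleLen (r : Rule) : ℕ := r.1.card
/-- Well-formed rule: attributes in the left-hand side are pairwise different. -/
def WFRule (r : Rule) : Prop := ∀ p ∈ r.1, ∀ q ∈ r.1, p.1 = q.1 → p.2 = q.2
/-- Well-formed decision rule system: a finite nonempty set of well-formed rules. -/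
def WFS (S : DRS) : Prop := S.Nonempty ∧ ∀ r ∈ S, WFRule r

/-- `A(S)`: attributes of a system. -/
def AS (S : DRS) : Finset Attr := S.biUnion Ar
/-- `n(S) = |A(S)|`. -/
def nS (S : DRS) : ℕ := (AS S).card
/-- `d(S)`: the maximum length of a rule in `S`. -/
def dS (S : DRS) : ℕ := S.sup ruleLen
/-- `V_S(a)`: values of attribute `a` occurring in `S`. -/
def VS (S : DRS) (a : Attr) : Finset ℕ :=
  S.biUnion fun r => (r.1.filter fun p => p.1 = a).image Prod.snd
/-- `k(S)`: maximum number of values of a single attribute. -/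
def kS (S : DRS) : ℕ := (AS S).sup fun a => (VS S a).card

/-- Branching sets of o-decision trees: `V_S(a)`. -/
def Bo (S : DRS) (a : Attr) : Finset Val := (VS S a).image some
/-- Branching sets of e-decision trees: `EV_S(a) = V_S(a) ∪ {*}`. -/
def Be (S : DRS) (a : Attr) : Finset Val := insert none (Bo S a)

/-- Consistency of an equation system. -/
def Consistent (K : EqSys) : Prop := ∀ p ∈ K, ∀ q ∈ K, p.1 = q.1 → p.2 = q.2

/-- Decision trees: terminal nodes labeled with sets of rules, working nodes labeled
with an attribute and having a child for each possible value (only children whose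
labels lie in the relevant branching set are meaningful). -/
inductive DTree where
  | leaf : DRS → DTree
  | node : Attr → (Val → DTree) → DTree

/-- Depth of a decision tree with respect to branching sets `B`. -/
def depthT (B : Attr → Finset Val) : DTree → ℕ
  | .leaf _ => 0
  | .node a c => ((B a).sup fun v => depthT B (c v)) + 1

/-- A decision tree over a system `S` (with branching sets `B`). -/
def TreeOver (B : Attr → Finset Val) (S : DRS) : DTree → Prop
  | .leaf Z => Z ⊆ S
  | .node a c => a ∈ AS S ∧ ∀ v ∈ B a, TreeOver B S (c v)

/-- `PathT B Γ K Z`: there is a complete path in `Γ` (following edges with labels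
in the branching sets `B`) with equation system `K` and terminal label `Z`. -/
inductive PathT (B : Attr → Finset Val) : DTree → EqSys → DRS → Prop
  | leaf (Z : DRS) : PathT B (.leaf Z) ∅ Z
  | node (a : Attr) (c : Val → DTree) (v : Val) (K : EqSys) (Z : DRS) :
      v ∈ B a → PathT B (c v) K Z → PathT B (.node a c) (insert (a, v) K) Z

/-- `Γ` solves the problem given by correctness condition `cond` on (K(ξ), τ(ξ)). -/
def Solves (cond : EqSys → DRS → Prop) (B : Attr → Finset Val) (Γ : DTree) : Prop :=
  ∀ K Z, PathT B Γ K Z → Consistent K → cond K Z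

/-- Correctness condition for the All Rules problem. -/
def CondAR (S : DRS) (K : EqSys) (Z : DRS) : Prop :=
  (∀ r ∈ Z, Kr r ⊆ K) ∧ ∀ r ∈ S, r ∉ Z → ¬ Consistent (Kr r ∪ K)
/-- Correctness condition for the All Decisions problem. -/
def CondAD (S : DRS) (K : EqSys) (Z : DRS) : Prop :=
  (∀ r ∈ Z, Kr r ⊆ K) ∧ ∀ r ∈ S, r.2 ∉ Z.image Prod.snd → ¬ Consistent (Kr r ∪ K)
/-- Correctness condition for the Some Rules problem. -/
def CondSR (S : DRS) (K : EqSys) (Z : DRS) : Prop :=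
  (∀ r ∈ Z, Kr r ⊆ K) ∧ (Z = ∅ → ∀ r ∈ S, ¬ Consistent (Kr r ∪ K))

/-- Minimum depth of a decision tree over `S` solving the given problem. -/
def hgen (cond : DRS → EqSys → DRS → Prop) (B : DRS → Attr → Finset Val) (S : DRS) : ℕ :=
  sInf {m | ∃ Γ, TreeOver (B S) S Γ ∧ Solves (cond S) (B S) Γ ∧ depthT (B S) Γ = m}

def hAR (S : DRS) : ℕ := hgen CondAR Bo S
def hEAR (S : DRS) : ℕ := hgen CondAR Be S
def hAD (S : DRS) : ℕ := hgen CondAD Bo S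
def hEAD (S : DRS) : ℕ := hgen CondAD Be S
def hSR (S : DRS) : ℕ := hgen CondSR Bo S
def hESR (S : DRS) : ℕ := hgen CondSR Be S

/-- SR-reduced system. -/
def SRred (S : DRS) : Prop := ∀ r ∈ S, ¬ ∃ r' ∈ S, r'.1 ⊂ r.1
/-- AD-reduced system. -/
def ADred (S : DRS) : Prop := ∀ r ∈ S, ¬ ∃ r' ∈ S, r'.1 ⊂ r.1 ∧ r'.2 = r.2
/-- `R_SR(S)`. -/
def RSR (S : DRS) : DRS := S.filter fun r => ¬ ∃ r' ∈ S, r'.1 ⊂ r.1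
/-- `R_AD(S)`. -/
def RAD (S : DRS) : DRS := S.filter fun r => ¬ ∃ r' ∈ S, r'.1 ⊂ r.1 ∧ r'.2 = r.2

/-- `h_C(n,d,k)`: minimum of `h S` over systems with the given parameters. -/
def hmin (h : DRS → ℕ) (n d k : ℕ) : ℕ :=
  sInf {m | ∃ S, WFS S ∧ nS S = n ∧ dS S = d ∧ kS S = k ∧ h S = m}
/-- `H_C(n,d,k)`: maximum of `h S` over systems with the given parameters. -/
def Hmax (h : DRS → ℕ) (n d k : ℕ) : ℕ :=
  sSup {m | ∃ S, WFS S ∧ nS S = n ∧ dS S = d ∧ kS S = k ∧ h S = m}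
/-- `h_C^R(n,d,k)`: minimum of `h S` over reduced systems (`P`) with given parameters. -/
def hminR (h : DRS → ℕ) (P : DRS → Prop) (n d k : ℕ) : ℕ :=
  sInf {m | ∃ S, WFS S ∧ P S ∧ nS S = n ∧ dS S = d ∧ kS S = k ∧ h S = m}
/-- `H_C^R(n,d,k)`: maximum of `h S` over reduced systems (`P`) with given parameters. -/
def HmaxR (h : DRS → ℕ) (P : DRS → Prop) (n d k : ℕ) : ℕ :=
  sSup {m | ∃ S, WFS S ∧ P S ∧ nS S = n ∧ dS S = d ∧ kS S = k ∧ h S = m}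

/-- Node cover of the hypergraph `G(S)`. -/
def NodeCover (S : DRS) (B : Finset Attr) : Prop :=
  B ⊆ AS S ∧ ∀ r ∈ S, Ar r ≠ ∅ → (Ar r ∩ B).Nonempty
/-- `β(S)`: minimum cardinality of a node cover of `G(S)`. -/
def nodeCoverNum (S : DRS) : ℕ := sInf {m | ∃ B, NodeCover S B ∧ B.card = m}

/-- `I_SR(S)`. -/
def ISR (S : DRS) : DRS := if ∀ r ∈ S, r.1 ≠ ∅ then S else S.filter fun r => r.1 = ∅
/-- `D_0(S)`: right-hand sides of length-0 rules. -/
def D0 (S : DRS) : Finset ℕ := (S.filter fun r => r.1 = ∅).image Prod.snd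
/-- `I_AD(S)`. -/
def IAD (S : DRS) : DRS := S.filter fun r => r.1 = ∅ ∨ r.2 ∉ D0 S

/-- `K(S, δ̄)` for an assignment `f` of numeric values to all attributes of `S`. -/
def KStuple (S : DRS) (f : Attr → ℕ) : EqSys := (AS S).image fun a => (a, some (f a))
/-- An incomplete decision rule system. -/
def IncompleteS (S : DRS) : Prop :=
  ∃ f : Attr → ℕ, (∀ a ∈ AS S, f a ∈ VS S a) ∧ ∀ r ∈ S, ¬ Consistent (Kr r ∪ KStuple S f)

/-- `r_α`: remove from the left-hand side of `r` all equations belonging to `α`. -/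
def resRule (α : EqSys) (r : Rule) : Rule :=
  (r.1.filter fun p => (p.1, (some p.2 : Val)) ∉ α, r.2)
/-- `S_α`: rules `r_α` for the rules `r ∈ S` with `K(r) ∪ α` consistent. -/
def Sres (α : EqSys) (S : DRS) : DRS :=
  (S.filter fun r => Consistent (Kr r ∪ α)).image (resRule α)

/-- Value chosen at a node labeled by an attribute `a ∉ A(S_α)` when building `Γ_α`:
the `α`-value of `a` if `a` occurs in `α`, and the minimum number of `V_S(a)` otherwise. -/
def chooseVal (α : EqSys) (S : DRS) (a : Attr) : Val :=
  if h : ∃ v, (a, v) ∈ α then Classical.choose h else some (sInf {n : ℕ | n ∈ VS S a})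

/-- The decision tree `Γ_α`. -/
def resTree (α : EqSys) (S : DRS) : DTree → DTree
  | .leaf Z => .leaf (Sres α Z)
  | .node a c =>
      if a ∈ AS (Sres α S) then .node a fun v => resTree α S (c v)
      else resTree α S (c (chooseVal α S a))

/-- The o-decision tree `o(Γ)`: remove all nodes reachable only via an edge labeled `*`. -/
def oTree : DTree → DTree
  | .leaf Z => .leaf Z
  | .node a c => .node a fun v => match v with
      | none => .leaf ∅
      | some x => oTree (c (some x))

/-!
Follow, in an arbitrary decision tree solving the problem, the path whose answers agree with a
longest rule `r` (and are `*`, or any value of `V_S(a)` for o-trees, on the other attributes).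
Along this path `K(r) ∪ K` stays consistent, so the terminal label must contain `r` (All Rules)
or some rule `r'` with `K(r') ⊆ K`. For e-trees every numeric equation of `K` comes from `r`,
so `r'` has a sub-left-hand side of `r`; reducedness forces it to be all of `r`'s. Either way
`K` contains a copy of a left-hand side of length `d(S)`, and `|K|` is at most the depth.
-/

open Finset

section Trees

variable {B B' : Attr → Finset Val} {S : DRS}

namespace PathT

variable {Γ : DTree} {K : EqSys} {Z : DRS}

theorem card_le_depthT (h : PathT B Γ K Z) : K.card ≤ depthT B Γ := by
  induction h with
  | leaf => simp [depthT]
  | node a c v K Z hv _ ih =>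
    calc (insert (a, v) K).card ≤ K.card + 1 := card_insert_le _ _
      _ ≤ ((B a).sup fun v => depthT B (c v)) + 1 :=
        Nat.add_le_add_right (ih.trans (le_sup (f := fun v => depthT B (c v)) hv)) 1

theorem subset_of_treeOver (h : PathT B Γ K Z) (ht : TreeOver B S Γ) : Z ⊆ S := by
  induction h with
  | leaf => exact ht
  | node a c v K Z hv _ ih => exact ih (ht.2 v hv)

theorem mono (hB : ∀ a, B a ⊆ B' a) (h : PathT B Γ K Z) : PathT B' Γ K Z := by
  induction h with
  | leaf Z => exact .leaf Z
  | node a c v K Z hv _ ih => exact .node a c v K Z (hB a hv) ih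

end PathT

theorem TreeOver.mono (hB : ∀ a, B a ⊆ B' a) : ∀ {Γ}, TreeOver B' S Γ → TreeOver B S Γ
  | .leaf _, ht => ht
  | .node _ _, ⟨ha, hc⟩ => ⟨ha, fun v hv => TreeOver.mono hB (hc v (hB _ hv))⟩

theorem depthT_mono (hB : ∀ a, B a ⊆ B' a) : ∀ Γ, depthT B Γ ≤ depthT B' Γ
  | .leaf _ => le_rfl
  | .node a c => Nat.add_le_add_right (Finset.sup_le fun v hv =>
      (depthT_mono hB (c v)).trans (le_sup (f := fun v => depthT B' (c v)) (hB a hv))) 1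

theorem TreeOver.exists_pathT (φ : Attr → Val) (hφ : ∀ a ∈ AS S, φ a ∈ B a) :
    ∀ {Γ}, TreeOver B S Γ → ∃ K Z, PathT B Γ K Z ∧ ∀ p ∈ K, p.2 = φ p.1
  | .leaf Z, _ => ⟨∅, Z, .leaf Z, by simp⟩
  | .node a c, ⟨ha, hc⟩ =>
    let ⟨K, Z, hp, hK⟩ := TreeOver.exists_pathT φ hφ (hc (φ a) (hφ a ha))
    ⟨insert (a, φ a) K, Z, .node a c _ K Z (hφ a ha) hp, by simpa using hK⟩

def queryTree (f : EqSys → DRS) : List Attr → DTree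
  | [] => .leaf (f ∅)
  | a :: l => .node a fun v => queryTree (fun K => f (insert (a, v) K)) l

theorem treeOver_queryTree {l : List Attr} (hl : ∀ a ∈ l, a ∈ AS S) {f : EqSys → DRS}
    (hf : ∀ K, f K ⊆ S) : TreeOver B S (queryTree f l) := by
  induction l generalizing f with
  | nil => exact hf ∅
  | cons a l ih =>
    exact ⟨hl a List.mem_cons_self, fun v _ =>
      ih (fun b hb => hl b (List.mem_cons_of_mem a hb)) fun K => hf _⟩

theorem PathT.of_queryTree {l : List Attr} {f : EqSys → DRS} {K : EqSys} {Z : DRS}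
    (hp : PathT B (queryTree f l) K Z) : Z = f K ∧ ∀ a ∈ l, ∃ v, (a, v) ∈ K := by
  induction l generalizing f K with
  | nil => cases hp; exact ⟨rfl, by simp⟩
  | cons a l ih =>
    cases hp with
    | node _ _ v K' _ _ hp' =>
      obtain ⟨rfl, hK'⟩ := ih hp'
      refine ⟨rfl, fun b hb => ?_⟩
      rcases List.mem_cons.1 hb with rfl | hb
      · exact ⟨v, mem_insert_self _ _⟩
      · obtain ⟨w, hw⟩ := hK' b hb
        exact ⟨w, mem_insert_of_mem hw⟩

end Trees

section Rules

theorem Kr_card (r : Rule) : (Kr r).card = ruleLen r :=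
  card_image_of_injective _ fun p q h => by
    simpa [Prod.ext_iff] using h

theorem consistent_of_forall_snd_eq {K : EqSys} (φ : Attr → Val)
    (h : ∀ p ∈ K, p.2 = φ p.1) : Consistent K :=
  fun p hp q hq hpq => by rw [h p hp, h q hq, hpq]

theorem Kr_subset_of_consistent_union {r : Rule} {K : EqSys}
    (hK : ∀ a ∈ Ar r, ∃ v, (a, v) ∈ K) (h : Consistent (Kr r ∪ K)) : Kr r ⊆ K := by
  intro e he
  obtain ⟨p, hp, rfl⟩ := mem_image.1 he
  obtain ⟨v, hv⟩ := hK p.1 (mem_image_of_mem _ hp)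
  obtain rfl : some p.2 = v := h _ (mem_union_left _ he) _ (mem_union_right _ hv) rfl
  exact hv

theorem mem_VS_of_mem {S : DRS} {r : Rule} {a : Attr} {δ : ℕ} (hr : r ∈ S)
    (h : (a, δ) ∈ r.1) : δ ∈ VS S a :=
  mem_biUnion.2 ⟨r, hr, mem_image.2 ⟨(a, δ), mem_filter.2 ⟨h, rfl⟩, rfl⟩⟩

theorem VS_nonempty {S : DRS} {a : Attr} (ha : a ∈ AS S) : (VS S a).Nonempty := by
  obtain ⟨r, hr, har⟩ := mem_biUnion.1 ha
  obtain ⟨p, hp, rfl⟩ := mem_image.1 har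
  exact ⟨p.2, mem_VS_of_mem hr hp⟩

def ruleVal (r : Rule) (a : Attr) : Val :=
  if h : ∃ δ, (a, δ) ∈ r.1 then some h.choose else none

variable {S : DRS} {r : Rule}

theorem ruleVal_of_mem (hwf : WFRule r) {p : Attr × ℕ} (hp : p ∈ r.1) :
    ruleVal r p.1 = some p.2 := by
  have h : ∃ δ, (p.1, δ) ∈ r.1 := ⟨p.2, hp⟩
  rw [ruleVal, dif_pos h]
  exact congrArg some (hwf _ h.choose_spec p hp rfl)

theorem mem_of_ruleVal_eq_some {a : Attr} {δ : ℕ} (h : ruleVal r a = some δ) :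
    (a, δ) ∈ r.1 := by
  unfold ruleVal at h
  split at h
  · next h' => exact Option.some_injective _ h ▸ h'.choose_spec
  · cases h

theorem ruleVal_mem_Be (hr : r ∈ S) (a : Attr) : ruleVal r a ∈ Be S a := by
  cases h : ruleVal r a with
  | none => exact mem_insert_self _ _
  | some δ =>
    exact mem_insert_of_mem (mem_image_of_mem _ (mem_VS_of_mem hr (mem_of_ruleVal_eq_some h)))

theorem ruleVal_or_mem_Bo (hr : r ∈ S) {a : Attr} (ha : a ∈ AS S) :
    (ruleVal r a).or (some (sInf (VS S a : Set ℕ))) ∈ Bo S a := by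
  cases h : ruleVal r a with
  | none => exact mem_image_of_mem _ (Nat.sInf_mem (VS_nonempty ha))
  | some δ => exact mem_image_of_mem _ (mem_VS_of_mem hr (mem_of_ruleVal_eq_some h))

end Rules

section LowerBounds

variable {B : Attr → Finset Val} {S : DRS} {Γ : DTree} {r : Rule}

theorem ruleLen_le_depthT_of_pathT {K : EqSys} {Z : DRS} (hp : PathT B Γ K Z) (h : Kr r ⊆ K) :
    ruleLen r ≤ depthT B Γ :=
  Kr_card r ▸ (card_le_card h).trans hp.card_le_depthT

theorem TreeOver.exists_pathT_consistent_union (φ : Attr → Val)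
    (hφ : ∀ a ∈ AS S, φ a ∈ B a) (hφr : ∀ p ∈ r.1, φ p.1 = some p.2)
    (ht : TreeOver B S Γ) :
    ∃ K Z, PathT B Γ K Z ∧ Consistent K ∧ Consistent (Kr r ∪ K) ∧
      ∀ p ∈ K, p.2 = φ p.1 := by
  obtain ⟨K, Z, hp, hK⟩ := ht.exists_pathT φ hφ
  refine ⟨K, Z, hp, consistent_of_forall_snd_eq φ hK, consistent_of_forall_snd_eq φ ?_, hK⟩
  intro e he
  rcases mem_union.1 he with h | h
  · obtain ⟨p, hp, rfl⟩ := mem_image.1 h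
    exact (hφr p hp).symm
  · exact hK e h

theorem TreeOver.exists_pathT_ruleVal (hr : r ∈ S) (hwf : WFRule r)
    (ht : TreeOver (Be S) S Γ) :
    ∃ K Z, PathT (Be S) Γ K Z ∧ Consistent K ∧ Consistent (Kr r ∪ K) ∧
      ∀ r' : Rule, Kr r' ⊆ K → r'.1 ⊆ r.1 := by
  obtain ⟨K, Z, hp, hK, hrK, hKr⟩ := ht.exists_pathT_consistent_union (ruleVal r)
    (fun a _ => ruleVal_mem_Be hr a) (fun p hp => ruleVal_of_mem hwf hp)
  refine ⟨K, Z, hp, hK, hrK, fun r' h p hp => mem_of_ruleVal_eq_some ?_⟩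
  exact (hKr _ (h (mem_image_of_mem _ hp))).symm

theorem ruleLen_le_depthT_of_solves_condAR (hr : r ∈ S) (hwf : WFRule r)
    (ht : TreeOver (Bo S) S Γ) (hs : Solves (CondAR S) (Bo S) Γ) :
    ruleLen r ≤ depthT (Bo S) Γ := by
  obtain ⟨K, Z, hp, hK, hrK, -⟩ := ht.exists_pathT_consistent_union _
    (fun a => ruleVal_or_mem_Bo hr) (fun p hp => by rw [ruleVal_of_mem hwf hp]; rfl)
  have hcond := hs K Z hp hK
  have hrZ : r ∈ Z := by_contra fun h => hcond.2 r hr h hrK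
  exact ruleLen_le_depthT_of_pathT hp (hcond.1 r hrZ)

theorem ruleLen_le_depthT_of_solves_condSR (hred : SRred S) (hr : r ∈ S) (hwf : WFRule r)
    (ht : TreeOver (Be S) S Γ) (hs : Solves (CondSR S) (Be S) Γ) :
    ruleLen r ≤ depthT (Be S) Γ := by
  obtain ⟨K, Z, hp, hK, hrK, hsub⟩ := ht.exists_pathT_ruleVal hr hwf
  have hcond := hs K Z hp hK
  obtain ⟨r', hr'⟩ := nonempty_iff_ne_empty.2 fun hZ => hcond.2 hZ r hr hrK
  have hr'K := hcond.1 r' hr'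
  have heq : r'.1 = r.1 :=
    (hsub r' hr'K).eq_of_not_ssubset fun h => hred r hr ⟨r', hp.subset_of_treeOver ht hr', h⟩
  simpa only [ruleLen, heq] using ruleLen_le_depthT_of_pathT hp hr'K

theorem ruleLen_le_depthT_of_solves_condAD (hred : ADred S) (hr : r ∈ S) (hwf : WFRule r)
    (ht : TreeOver (Be S) S Γ) (hs : Solves (CondAD S) (Be S) Γ) :
    ruleLen r ≤ depthT (Be S) Γ := by
  obtain ⟨K, Z, hp, hK, hrK, hsub⟩ := ht.exists_pathT_ruleVal hr hwf
  have hcond := hs K Z hp hK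
  obtain ⟨r', hr', hr'2⟩ := mem_image.1 (by_contra fun h => hcond.2 r hr h hrK)
  have hr'K := hcond.1 r' hr'
  have heq : r'.1 = r.1 :=
    (hsub r' hr'K).eq_of_not_ssubset fun h =>
      hred r hr ⟨r', hp.subset_of_treeOver ht hr', h, hr'2⟩
  simpa only [ruleLen, heq] using ruleLen_le_depthT_of_pathT hp hr'K

end LowerBounds

section Complexity

/-- The tree asking every attribute of `S` and returning the rules realized by the answers. -/
theorem exists_treeOver_solves_condAR (B : Attr → Finset Val) (S : DRS) :
    ∃ Γ, TreeOver B S Γ ∧ Solves (CondAR S) B Γ := by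
  refine ⟨queryTree (fun K => S.filter fun r => Kr r ⊆ K) (AS S).toList,
    treeOver_queryTree (fun a => mem_toList.1) fun _ => filter_subset _ _, fun K Z hp _ => ?_⟩
  obtain ⟨rfl, hK⟩ := hp.of_queryTree
  refine ⟨fun r hr => (mem_filter.1 hr).2,
    fun r hr hrZ hcons => hrZ (mem_filter.2 ⟨hr, ?_⟩)⟩
  exact Kr_subset_of_consistent_union
    (fun a ha => hK a (mem_toList.2 (subset_biUnion_of_mem Ar hr ha))) hcons

theorem CondAR.condSR {S : DRS} {K : EqSys} {Z : DRS} (h : CondAR S K Z) : CondSR S K Z :=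
  ⟨h.1, fun hZ r hr => h.2 r hr (hZ ▸ notMem_empty r)⟩

theorem CondAR.condAD {S : DRS} {K : EqSys} {Z : DRS} (h : CondAR S K Z) : CondAD S K Z :=
  ⟨h.1, fun r hr hr2 => h.2 r hr fun hrZ => hr2 (mem_image_of_mem _ hrZ)⟩

variable {cond : DRS → EqSys → DRS → Prop} {B : DRS → Attr → Finset Val} {S : DRS}

theorem hgen_le {Γ : DTree} (ht : TreeOver (B S) S Γ) (hs : Solves (cond S) (B S) Γ) :
    hgen cond B S ≤ depthT (B S) Γ :=
  Nat.sInf_le ⟨Γ, ht, hs, rfl⟩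

/-- `hgen` is an `sInf`, which is `0` on the empty set; the hypothesis `hcond` supplies a
solving tree. -/
theorem le_hgen (hcond : ∀ K Z, CondAR S K Z → cond S K Z) {n : ℕ}
    (h : ∀ Γ, TreeOver (B S) S Γ → Solves (cond S) (B S) Γ → n ≤ depthT (B S) Γ) :
    n ≤ hgen cond B S := by
  obtain ⟨Γ, ht, hs⟩ := exists_treeOver_solves_condAR (B S) S
  refine le_csInf ⟨_, Γ, ht, fun K Z hp hK => hcond K Z (hs K Z hp hK), rfl⟩ ?_
  rintro _ ⟨Γ, ht, hs, rfl⟩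
  exact h Γ ht hs

theorem hgen_Bo_le_hgen_Be (hcond : ∀ K Z, CondAR S K Z → cond S K Z) :
    hgen cond Bo S ≤ hgen cond Be S := by
  have hB : ∀ a, Bo S a ⊆ Be S a := fun a => subset_insert _ _
  refine le_hgen hcond fun Γ ht hs => ?_
  exact (hgen_le (ht.mono hB) fun K Z hp => hs K Z (hp.mono hB)).trans (depthT_mono hB Γ)

end Complexity

/-- lower bounds via the maximum rule length `d(S)`. -/
theorem stmt7 (S : DRS) (hS : WFS S) :
    (hAR S ≤ hEAR S ∧ dS S ≤ hAR S) ∧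
    (SRred S → dS S ≤ hESR S) ∧
    (ADred S → dS S ≤ hEAD S) := by
  obtain ⟨r, hr, hd⟩ := exists_mem_eq_sup S hS.1 ruleLen
  have hwf := hS.2 r hr
  rw [show dS S = ruleLen r from hd]
  refine ⟨⟨hgen_Bo_le_hgen_Be fun _ _ => id, ?_⟩, fun hred => ?_, fun hred => ?_⟩
  · exact le_hgen (fun _ _ => id) fun _ => ruleLen_le_depthT_of_solves_condAR hr hwf
  · exact le_hgen (fun _ _ => CondAR.condSR) fun _ =>
      ruleLen_le_depthT_of_solves_condSR hred hr hwf
  · exact le_hgen (fun _ _ => CondAR.condAD) fun _ =>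
      ruleLen_le_depthT_of_solves_condAD hred hr hwf
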